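/- arXiv:2505.16046 — 2 statements merged into one kernel-verified Lean document; each statement's English description precedes it below -/
import Mathlib

section
/- For all integers m ≥ 0 and N ≥ 1, the trigonometric sum Φ_m(N) = (2/N) ∑_{k=0}^{N-1} sin(π(2k+1)/(4N)) cos^{2m}(π(2k+1)/(4N)) equals (1/(N·2^{2m})) ∑_{r=0}^{2m} C(2m, r) / sin(π(2m+1-2r)/(4N)). -/
open Real Finset

/-- Telescoping sum of sines of odd multiples. -/
lemma sum_sin_odd (N : ℕ) (x : ℝ) (hx : Real.sin x ≠ 0) :
    ∑ k ∈ Finset.range N, Real.sin ((2 * k + 1) * x)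
      = Real.sin (N * x) ^ 2 / Real.sin x := by
  have key : ∀ k : ℕ, Real.sin ((2 * k + 1) * x) * Real.sin x
      = (Real.cos (2 * k * x) - Real.cos (2 * (k + 1) * x)) / 2 := by
    intro k
    have h := Real.cos_sub_cos (2 * k * x) (2 * (k + 1) * x)
    have e1 : (2 * (k:ℝ) * x + 2 * (k + 1) * x) / 2 = (2 * k + 1) * x := by ring
    have e2 : (2 * (k:ℝ) * x - 2 * (k + 1) * x) / 2 = -x := by ring
    rw [e1, e2, Real.sin_neg] at h
    linarith
  have hsum : (∑ k ∈ Finset.range N, Real.sin ((2 * k + 1) * x)) * Real.sin x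
      = Real.sin (N * x) ^ 2 := by
    rw [Finset.sum_mul]
    have step : ∀ k ∈ Finset.range N, Real.sin ((2 * k + 1) * x) * Real.sin x
        = ((fun k : ℕ => Real.cos (2 * k * x)) k
            - (fun k : ℕ => Real.cos (2 * k * x)) (k + 1)) / 2 := by
      intro k _
      have := key k
      simpa [Nat.cast_add] using this
    rw [Finset.sum_congr rfl step, ← Finset.sum_div,
      Finset.sum_range_sub' (fun k : ℕ => Real.cos (2 * k * x)) N]
    have hc := Real.cos_two_mul ((N : ℝ) * x)
    have hs := Real.sin_sq_add_cos_sq ((N : ℝ) * x)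
    have h0 : Real.cos (2 * (0:ℕ) * x) = 1 := by norm_num
    have h2 : (2 * ((N:ℝ) * x)) = 2 * (N:ℝ) * x := by ring
    rw [h2] at hc
    simp only [h0]
    nlinarith
  rw [eq_div_iff hx]
  exact hsum

/-- Evaluation at x = j*π/(4N) for odd integer j. -/
lemma sum_sin_eval (N : ℕ) (hN : 1 ≤ N) (j : ℤ) (hj : Odd j) :
    ∑ k ∈ Finset.range N, Real.sin ((2 * k + 1) * ((j : ℝ) * π / (4 * N)))
      = 1 / (2 * Real.sin ((j : ℝ) * π / (4 * N))) := by
  have hN0 : (N : ℝ) ≠ 0 := by positivity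
  set x : ℝ := (j : ℝ) * π / (4 * N) with hxdef
  have hx : Real.sin x ≠ 0 := by
    intro h
    rcases Real.sin_eq_zero_iff.mp h with ⟨n, hn⟩
    rw [hxdef] at hn
    have h4 : (n : ℝ) * (4 * N) * π = (j : ℝ) * π := by
      field_simp at hn
      rw [← hn]; ring
    have h5 : (n : ℝ) * (4 * N) = (j : ℝ) := mul_right_cancel₀ Real.pi_ne_zero h4
    have hcast : (n * (4 * N) : ℤ) = j := by exact_mod_cast h5
    have hdvd : (2 : ℤ) ∣ j := ⟨n * (2 * N), by rw [← hcast]; ring⟩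
    rcases hj with ⟨s, hs⟩
    rcases hdvd with ⟨t, ht⟩
    omega
  obtain ⟨s, hs⟩ := hj
  have hNx : Real.sin ((N : ℝ) * x) ^ 2 = 1 / 2 := by
    have harg : 2 * ((N : ℝ) * x) = (s : ℝ) * π + π / 2 := by
      rw [hxdef]
      have : (j : ℝ) = 2 * s + 1 := by exact_mod_cast hs
      rw [this]
      field_simp
      ring
    have hc0 : Real.cos (2 * ((N : ℝ) * x)) = 0 := by
      rw [harg, Real.cos_add_pi_div_two, Real.sin_int_mul_pi, neg_zero]
    have hc := Real.cos_two_mul ((N : ℝ) * x)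
    have hs2 := Real.sin_sq_add_cos_sq ((N : ℝ) * x)
    nlinarith
  rw [sum_sin_odd N x hx, hNx, div_div]

/-- Product-to-sum expansion of sin θ · cos θ ^ n. -/
lemma sin_mul_cos_pow (n : ℕ) (θ : ℝ) :
    Real.sin θ * Real.cos θ ^ n
      = (1 / 2 ^ n) * ∑ r ∈ Finset.range (n + 1),
          (Nat.choose n r : ℝ) * Real.sin (((n : ℝ) + 1 - 2 * r) * θ) := by
  have key : Complex.exp (θ * Complex.I) * (Complex.cos θ) ^ n
      = (1 / 2 ^ n) * ∑ r ∈ Finset.range (n + 1),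
          (Nat.choose n r : ℂ) * Complex.exp ((((n : ℂ) + 1 - 2 * r) * θ) * Complex.I) := by
    have hc : Complex.cos θ = (Complex.exp (-(θ:ℂ) * Complex.I) + Complex.exp ((θ:ℂ) * Complex.I)) / 2 := by
      rw [Complex.cos]; ring_nf
    rw [hc, div_pow, add_pow, Finset.sum_div, Finset.mul_sum, Finset.mul_sum]
    apply Finset.sum_congr rfl
    intro r hr
    have hr' : r ≤ n := Nat.lt_succ_iff.mp (Finset.mem_range.mp hr)
    have e1 : Complex.exp (-(θ:ℂ) * Complex.I) ^ r = Complex.exp ((r : ℂ) * (-(θ:ℂ) * Complex.I)) :=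
      (Complex.exp_nat_mul _ r).symm
    have e2 : Complex.exp ((θ:ℂ) * Complex.I) ^ (n - r)
        = Complex.exp (((n - r : ℕ) : ℂ) * ((θ:ℂ) * Complex.I)) :=
      (Complex.exp_nat_mul _ (n - r)).symm
    rw [e1, e2, Nat.cast_sub hr', ← Complex.exp_add]
    have e3 : Complex.exp ((θ:ℂ) * Complex.I)
        * Complex.exp ((r : ℂ) * (-(θ:ℂ) * Complex.I) + ((n : ℂ) - r) * ((θ:ℂ) * Complex.I))
        = Complex.exp ((((n : ℂ) + 1 - 2 * r) * θ) * Complex.I) := by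
      rw [← Complex.exp_add]
      congr 1
      ring
    linear_combination ((Nat.choose n r : ℂ) / 2 ^ n) * e3
  have him := congrArg Complex.im key
  have hL : (Complex.exp (θ * Complex.I) * (Complex.cos θ) ^ n).im
      = Real.sin θ * Real.cos θ ^ n := by
    have hpow : (Complex.cos θ) ^ n = ((Real.cos θ ^ n : ℝ) : ℂ) := by
      rw [← Complex.ofReal_cos, ← Complex.ofReal_pow]
    rw [hpow, Complex.mul_im]
    simp only [Complex.exp_ofReal_mul_I_im, Complex.exp_ofReal_mul_I_re,
      Complex.ofReal_im, Complex.ofReal_re, mul_zero, zero_add]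
  have hR : ((1 / 2 ^ n : ℂ) * ∑ r ∈ Finset.range (n + 1),
        (Nat.choose n r : ℂ) * Complex.exp ((((n : ℂ) + 1 - 2 * r) * θ) * Complex.I)).im
      = (1 / 2 ^ n) * ∑ r ∈ Finset.range (n + 1),
          (Nat.choose n r : ℝ) * Real.sin (((n : ℝ) + 1 - 2 * r) * θ) := by
    have harg : ∀ r : ℕ, (((n : ℂ) + 1 - 2 * r) * θ) * Complex.I
        = ((((n : ℝ) + 1 - 2 * r) * θ : ℝ) : ℂ) * Complex.I := by
      intro r; push_cast; ring
    have h1 : ((1 / 2 ^ n : ℂ)) = (((1 / 2 ^ n : ℝ)) : ℂ) := by push_cast; ring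
    rw [h1, Complex.im_ofReal_mul]
    congr 1
    rw [Complex.im_sum]
    apply Finset.sum_congr rfl
    intro r _
    rw [harg r]
    rw [show ((Nat.choose n r : ℂ)) = (((Nat.choose n r : ℝ)) : ℂ) by push_cast; ring]
    rw [Complex.im_ofReal_mul, Complex.exp_ofReal_mul_I_im]
  rw [← hL, him, hR]

/-- exact evaluation of the trigonometric sum Φ_m(N). -/
theorem phi_exact (m N : ℕ) (hN : 1 ≤ N) :
    (2 / (N : ℝ)) * ∑ k ∈ Finset.range N,
        Real.sin (π * (2 * k + 1) / (4 * N)) * Real.cos (π * (2 * k + 1) / (4 * N)) ^ (2 * m)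
      = (1 / ((N : ℝ) * 2 ^ (2 * m))) * ∑ r ∈ Finset.range (2 * m + 1),
          (Nat.choose (2 * m) r : ℝ) / Real.sin (π * ((2 * m : ℝ) + 1 - 2 * r) / (4 * N)) := by
  have hN0 : (N : ℝ) ≠ 0 := by positivity
  -- expand each summand
  have h1 : ∀ k : ℕ,
      Real.sin (π * (2 * k + 1) / (4 * N)) * Real.cos (π * (2 * k + 1) / (4 * N)) ^ (2 * m)
        = (1 / 2 ^ (2 * m)) * ∑ r ∈ Finset.range (2 * m + 1),
            (Nat.choose (2 * m) r : ℝ)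
              * Real.sin ((2 * k + 1) * (((2 * m + 1 - 2 * r : ℤ) : ℝ) * π / (4 * N))) := by
    intro k
    rw [sin_mul_cos_pow (2 * m) (π * (2 * k + 1) / (4 * N))]
    congr 1
    apply Finset.sum_congr rfl
    intro r _
    congr 2
    push_cast
    field_simp
  rw [Finset.sum_congr rfl (fun k _ => h1 k), ← Finset.mul_sum, Finset.sum_comm]
  have h2 : ∀ r ∈ Finset.range (2 * m + 1),
      ∑ k ∈ Finset.range N, (Nat.choose (2 * m) r : ℝ)
          * Real.sin ((2 * k + 1) * (((2 * m + 1 - 2 * r : ℤ) : ℝ) * π / (4 * N)))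
        = (Nat.choose (2 * m) r : ℝ)
            * (1 / (2 * Real.sin (π * ((2 * m : ℝ) + 1 - 2 * r) / (4 * N)))) := by
    intro r _
    rw [← Finset.mul_sum]
    congr 1
    have hodd : Odd (2 * m + 1 - 2 * r : ℤ) := ⟨m - r, by ring⟩
    have := sum_sin_eval N hN (2 * m + 1 - 2 * r : ℤ) hodd
    rw [this]
    congr 3
    push_cast
    ring
  rw [Finset.sum_congr rfl h2, Finset.mul_sum, Finset.mul_sum, Finset.mul_sum]
  apply Finset.sum_congr rfl
  intro r _
  ring
end

section
/- Let f be a quadratic polynomial over ℝ and let x be a point where f(x) > 0. Then for every n ≥ 1, the n-th derivative of √(f(x)) equals ∑_{k=⌈n/2⌉}^{n} ((-1)^{k+1} / 2^{n+k-1}) · (n!(2k-2)!)/((2k-n)!(n-k)!(k-1)!) · (f'(x))^{2k-n} (f''(x))^{n-k} / (f(x))^{k-1/2}. -/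
open Real Finset Polynomial


noncomputable def cf (n k : ℕ) : ℝ :=
  ((-1 : ℝ) ^ (k + 1) / 2 ^ (n + k - 1)) *
    ((n.factorial * (2 * k - 2).factorial : ℕ) : ℝ) /
      (((2 * k - n).factorial * (n - k).factorial * (k - 1).factorial : ℕ) : ℝ)

lemma cf_rec (j m : ℕ) :
    ((m : ℝ) + 2) * cf (2*j+m+2) (j+m+2) + (3/2 - ((j : ℝ) + (m : ℝ) + 2)) * cf (2*j+m+2) (j+m+1)
      = cf (2*j+m+3) (j+m+2) := by
  unfold cf
  simp only [show 2*j+m+2 + (j+m+2) - 1 = 3*j+2*m+3 by omega,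
    show 2*(j+m+2) - 2 = 2*j+2*m+1+1 by omega,
    show 2*(j+m+2) - (2*j+m+2) = m+1+1 by omega,
    show 2*j+m+2 - (j+m+2) = j by omega,
    show j+m+2-1 = j+m+1 by omega,
    show 2*j+m+2 + (j+m+1) - 1 = 3*j+2*m+2 by omega,
    show 2*(j+m+1) - 2 = 2*j+2*m by omega,
    show 2*(j+m+1) - (2*j+m+2) = m by omega,
    show 2*j+m+2 - (j+m+1) = j+1 by omega,
    show j+m+1-1 = j+m by omega,
    show 2*j+m+3 + (j+m+2) - 1 = 3*j+2*m+4 by omega,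
    show 2*(j+m+2) - (2*j+m+3) = m+1 by omega,
    show 2*j+m+3 - (j+m+2) = j+1 by omega,
    show 2*j+m+3 = 2*j+m+2+1 by omega]
  simp only [Nat.factorial_succ]
  push_cast
  have h1 : ((2*j+m+2).factorial : ℝ) ≠ 0 := Nat.cast_ne_zero.mpr (Nat.factorial_ne_zero _)
  have h2 : ((2*j+2*m).factorial : ℝ) ≠ 0 := Nat.cast_ne_zero.mpr (Nat.factorial_ne_zero _)
  have h3 : ((m).factorial : ℝ) ≠ 0 := Nat.cast_ne_zero.mpr (Nat.factorial_ne_zero _)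
  have h4 : ((j).factorial : ℝ) ≠ 0 := Nat.cast_ne_zero.mpr (Nat.factorial_ne_zero _)
  have h5 : ((j+m).factorial : ℝ) ≠ 0 := Nat.cast_ne_zero.mpr (Nat.factorial_ne_zero _)
  have h6 : ((j:ℝ)+1) ≠ 0 := by positivity
  have h7 : ((j:ℝ)+(m:ℝ)+1) ≠ 0 := by positivity
  have h8 : ((m:ℝ)+1) ≠ 0 := by positivity
  have h9 : ((m:ℝ)+2) ≠ 0 := by positivity
  have h10 : (2:ℝ) ≠ 0 := two_ne_zero
  field_simp
  ring

lemma cf_top (n : ℕ) :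
    (1/2 - ((n:ℝ)+1)) * cf (n+1) (n+1) = cf (n+2) (n+2) := by
  unfold cf
  simp only [show n+1 + (n+1) - 1 = 2*n+1 by omega,
    show 2*(n+1) - 2 = 2*n by omega,
    show 2*(n+1) - (n+1) = n+1 by omega,
    show n+1 - (n+1) = 0 by omega,
    show n+1-1 = n by omega,
    show n+2 + (n+2) - 1 = 2*n+3 by omega,
    show 2*(n+2) - 2 = 2*n+1+1 by omega,
    show 2*(n+2) - (n+2) = n+1+1 by omega,
    show n+2 - (n+2) = 0 by omega,
    show n+2-1 = n+1 by omega,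
    show n+2 = n+1+1 by omega]
  simp only [Nat.factorial_succ, Nat.factorial_zero]
  push_cast
  have h1 : ((n+1).factorial : ℝ) ≠ 0 := Nat.cast_ne_zero.mpr (Nat.factorial_ne_zero _)
  have h2 : ((2*n).factorial : ℝ) ≠ 0 := Nat.cast_ne_zero.mpr (Nat.factorial_ne_zero _)
  have h3 : ((n).factorial : ℝ) ≠ 0 := Nat.cast_ne_zero.mpr (Nat.factorial_ne_zero _)
  have h4 : ((n:ℝ)+1) ≠ 0 := by positivity
  have h5 : ((n:ℝ)+2) ≠ 0 := by positivity
  have h10 : (2:ℝ) ≠ 0 := two_ne_zero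
  field_simp
  ring

lemma cf_mid (m : ℕ) : cf (2*m+2) (m+1) = cf (2*m+1) (m+1) := by
  unfold cf
  simp only [show 2*m+2 + (m+1) - 1 = 3*m+2 by omega,
    show 2*(m+1) - 2 = 2*m by omega,
    show 2*(m+1) - (2*m+2) = 0 by omega,
    show 2*m+2 - (m+1) = m+1 by omega,
    show m+1-1 = m by omega,
    show 2*m+1 + (m+1) - 1 = 3*m+1 by omega,
    show 2*(m+1) - (2*m+1) = 1 by omega,
    show 2*m+1 - (m+1) = m by omega,
    show 2*m+2 = 2*m+1+1 by omega]
  simp only [Nat.factorial_succ, Nat.factorial_zero, Nat.factorial_one]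
  push_cast
  have h1 : ((2*m+1).factorial : ℝ) ≠ 0 := Nat.cast_ne_zero.mpr (Nat.factorial_ne_zero _)
  have h2 : ((2*m).factorial : ℝ) ≠ 0 := Nat.cast_ne_zero.mpr (Nat.factorial_ne_zero _)
  have h3 : ((m).factorial : ℝ) ≠ 0 := Nat.cast_ne_zero.mpr (Nat.factorial_ne_zero _)
  have h4 : ((m:ℝ)+1) ≠ 0 := by positivity
  have h10 : (2:ℝ) ≠ 0 := two_ne_zero
  field_simp
  ring

noncomputable def Pt (A B F : ℝ) (n k : ℕ) : ℝ :=
  ((2*k-n : ℕ) : ℝ) * cf n k * A^(2*k-n-1) * B^(n-k+1) * F^(-((k:ℝ)-1/2))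

noncomputable def Qt (A B F : ℝ) (n k : ℕ) : ℝ :=
  (1/2 - (k:ℝ)) * cf n k * A^(2*k-n+1) * B^(n-k) * F^(-((k:ℝ)-1/2) - 1)

noncomputable def Tt (A B F : ℝ) (n k : ℕ) : ℝ :=
  cf n k * A^(2*k-n) * B^(n-k) * F^(-((k:ℝ)-1/2))

lemma mid_step (A B F : ℝ) (n k : ℕ) (h1 : n + 2 ≤ 2*k) (h2 : k ≤ n) :
    Pt A B F n k + Qt A B F n (k-1) = Tt A B F (n+1) k := by
  obtain ⟨j, m, rfl, rfl⟩ : ∃ j m, n = 2*j+m+2 ∧ k = j+m+2 :=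
    ⟨n-k, 2*k-n-2, by omega, by omega⟩
  unfold Pt Qt Tt
  rw [show (j+m+2)-1 = j+m+1 by omega]
  simp only [show 2*(j+m+2)-(2*j+m+2) = m+2 by omega,
    show 2*(j+m+2)-(2*j+m+2)-1 = m+1 by omega,
    show 2*j+m+2-(j+m+2)+1 = j+1 by omega,
    show 2*(j+m+1)-(2*j+m+2)+1 = m+1 by omega,
    show 2*j+m+2-(j+m+1) = j+1 by omega,
    show 2*(j+m+2)-(2*j+m+2+1) = m+1 by omega,
    show 2*j+m+2+1-(j+m+2) = j+1 by omega,
    show 2*j+m+2+1 = 2*j+m+3 by omega]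
  rw [show -(((j+m+1:ℕ):ℝ)-1/2) - 1 = -(((j+m+2:ℕ):ℝ)-1/2) by push_cast; ring]
  rw [← cf_rec j m]
  push_cast
  ring

lemma top_step (A B F : ℝ) (n : ℕ) (hn : 1 ≤ n) :
    Qt A B F n n = Tt A B F (n+1) (n+1) := by
  obtain ⟨n, rfl⟩ : ∃ n', n = n'+1 := ⟨n-1, by omega⟩
  unfold Qt Tt
  simp only [show 2*(n+1)-(n+1)+1 = n+1+1 by omega,
    show (n+1)-(n+1) = 0 by omega,
    show 2*(n+1+1)-(n+1+1) = n+1+1 by omega,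
    show (n+1+1)-(n+1+1) = 0 by omega,
    show n+1+1 = n+2 by omega]
  rw [show -(((n+1:ℕ):ℝ)-1/2) - 1 = -(((n+2:ℕ):ℝ)-1/2) by push_cast; ring]
  rw [← cf_top n]
  push_cast
  ring

lemma bot_odd (A B F : ℝ) (m : ℕ) :
    Pt A B F (2*m+1) (m+1) = Tt A B F (2*m+2) (m+1) := by
  unfold Pt Tt
  simp only [show 2*(m+1)-(2*m+1) = 1 by omega,
    show 2*(m+1)-(2*m+1)-1 = 0 by omega,
    show 2*m+1-(m+1)+1 = m+1 by omega,
    show 2*(m+1)-(2*m+2) = 0 by omega,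
    show 2*m+2-(m+1) = m+1 by omega]
  rw [cf_mid m]
  push_cast
  ring

lemma bot_even (A B F : ℝ) (m : ℕ) : Pt A B F (2*m) m = 0 := by
  unfold Pt
  simp [show 2*m-2*m = 0 by omega]

lemma sum_step (A B F : ℝ) (n : ℕ) (hn : 1 ≤ n) :
    ∑ k ∈ Finset.Icc ((n+1)/2) n, (Pt A B F n k + Qt A B F n k)
      = ∑ k ∈ Finset.Icc ((n+1+1)/2) (n+1), Tt A B F (n+1) k := by
  rw [Finset.sum_add_distrib]
  have hQ : ∑ k ∈ Finset.Icc ((n+1)/2) n, Qt A B F n k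
      = ∑ k ∈ Finset.Icc ((n+1)/2+1) (n+1), Qt A B F n (k-1) := by
    rw [← Finset.map_add_right_Icc ((n+1)/2) n 1, Finset.sum_map]
    refine Finset.sum_congr rfl fun k hk => ?_
    simp [addRightEmbedding]
  rw [hQ]
  rcases Nat.even_or_odd n with ⟨m, hm⟩ | ⟨m, hm⟩
  · -- n = m + m, even; m ≥ 1
    have hm1 : 1 ≤ m := by omega
    obtain rfl : n = 2*m := by omega
    rw [show (2*m+1)/2 = m by omega, show (2*m+1+1)/2 = m+1 by omega]
    rw [Finset.Icc_eq_cons_Ioc (by omega : m ≤ 2*m), Finset.sum_cons, ← Finset.Icc_add_one_left_eq_Ioc]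
    rw [Finset.sum_Icc_succ_top (by omega : m+1 ≤ 2*m+1)]
    rw [Finset.sum_Icc_succ_top (by omega : m+1 ≤ 2*m+1)]
    rw [show 2*m+1-1 = 2*m by omega]
    rw [bot_even, top_step A B F (2*m) (by omega)]
    have hmid : ∀ k ∈ Finset.Icc (m+1) (2*m), Pt A B F (2*m) k + Qt A B F (2*m) (k-1)
        = Tt A B F (2*m+1) k := by
      intro k hk
      simp only [Finset.mem_Icc] at hk
      exact mid_step A B F (2*m) k (by omega) (by omega)
    calc 0 + ∑ k ∈ Finset.Icc (m+1) (2*m), Pt A B F (2*m) k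
          + (∑ k ∈ Finset.Icc (m+1) (2*m), Qt A B F (2*m) (k-1) + Tt A B F (2*m+1) (2*m+1))
        = ∑ k ∈ Finset.Icc (m+1) (2*m), (Pt A B F (2*m) k + Qt A B F (2*m) (k-1))
            + Tt A B F (2*m+1) (2*m+1) := by rw [Finset.sum_add_distrib]; ring
      _ = ∑ k ∈ Finset.Icc (m+1) (2*m), Tt A B F (2*m+1) k + Tt A B F (2*m+1) (2*m+1) := by
            rw [Finset.sum_congr rfl hmid]
  · -- n = 2*m+1
    obtain rfl : n = 2*m+1 := by omega
    rw [show (2*m+1+1)/2 = m+1 by omega, show (2*m+1+1+1)/2 = m+1 by omega]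
    rw [Finset.Icc_eq_cons_Ioc (by omega : m+1 ≤ 2*m+1), Finset.sum_cons, ← Finset.Icc_add_one_left_eq_Ioc]
    rw [Finset.Icc_eq_cons_Ioc (by omega : m+1 ≤ 2*m+1+1), Finset.sum_cons, ← Finset.Icc_add_one_left_eq_Ioc]
    rw [Finset.sum_Icc_succ_top (by omega : m+1+1 ≤ 2*m+1+1)]
    rw [Finset.sum_Icc_succ_top (by omega : m+1+1 ≤ 2*m+1+1)]
    rw [show 2*m+1+1-1 = 2*m+1 by omega]
    rw [bot_odd A B F m, top_step A B F (2*m+1) (by omega)]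
    have hmid : ∀ k ∈ Finset.Icc (m+1+1) (2*m+1), Pt A B F (2*m+1) k + Qt A B F (2*m+1) (k-1)
        = Tt A B F (2*m+1+1) k := by
      intro k hk
      simp only [Finset.mem_Icc] at hk
      exact mid_step A B F (2*m+1) k (by omega) (by omega)
    calc Tt A B F (2*m+2) (m+1) + ∑ k ∈ Finset.Icc (m+2) (2*m+1), Pt A B F (2*m+1) k
          + (∑ k ∈ Finset.Icc (m+2) (2*m+1), Qt A B F (2*m+1) (k-1) + Tt A B F (2*m+2) (2*m+2))
        = Tt A B F (2*m+2) (m+1)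
            + ∑ k ∈ Finset.Icc (m+2) (2*m+1), (Pt A B F (2*m+1) k + Qt A B F (2*m+1) (k-1))
            + Tt A B F (2*m+2) (2*m+2) := by rw [Finset.sum_add_distrib]; ring
      _ = Tt A B F (2*m+2) (m+1) + ∑ k ∈ Finset.Icc (m+2) (2*m+1), Tt A B F (2*m+2) k
            + Tt A B F (2*m+2) (2*m+2) := by
            rw [Finset.sum_congr rfl (by intro k hk; exact hmid k (by simp only [Finset.mem_Icc] at hk ⊢; omega))]
      _ = _ := by ring

lemma sum_step' (A B F : ℝ) (n : ℕ) (hn : 1 ≤ n) :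
    ∑ k ∈ Finset.Icc ((n+1)/2) n,
      ((((2*k-n : ℕ) : ℝ) * cf n k * A^(2*k-n-1) * B^(n-k+1) * F^(-((k:ℝ)-1/2)))
        + ((1/2 - (k:ℝ)) * cf n k * A^(2*k-n+1) * B^(n-k) * F^(-((k:ℝ)-1/2) - 1)))
      = ∑ k ∈ Finset.Icc ((n+1+1)/2) (n+1), Tt A B F (n+1) k := by
  have h := sum_step A B F n hn
  simp only [Pt, Qt] at h
  exact h

lemma key (f : Polynomial ℝ) (hf : f.natDegree ≤ 2) (n : ℕ) (hn : 1 ≤ n) :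
    ∀ x : ℝ, 0 < f.eval x →
      iteratedDeriv n (fun y => Real.sqrt (f.eval y)) x
        = ∑ k ∈ Finset.Icc ((n + 1) / 2) n,
            Tt ((Polynomial.derivative f).eval x)
              ((Polynomial.derivative (Polynomial.derivative f)).eval x) (f.eval x) n k := by
  induction n, hn using Nat.le_induction with
  | base =>
    intro x hx
    rw [iteratedDeriv_one]
    have hd : HasDerivAt (fun y => Real.sqrt (f.eval y))
        ((Polynomial.derivative f).eval x / (2 * Real.sqrt (f.eval x))) x :=
      (f.hasDerivAt x).sqrt hx.ne'
    rw [hd.deriv]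
    rw [show (1+1)/2 = 1 from rfl, Finset.Icc_self, Finset.sum_singleton]
    unfold Tt
    have hcf : cf 1 1 = 1/2 := by unfold cf; norm_num
    rw [hcf]
    rw [Real.sqrt_eq_rpow]
    rw [show -(((1:ℕ):ℝ)-1/2) = -(1/2 : ℝ) by norm_num]
    rw [Real.rpow_neg hx.le]
    have hpos : (0:ℝ) < (f.eval x) ^ ((1:ℝ)/2) := Real.rpow_pos_of_pos hx _
    simp only [pow_one, Nat.sub_self, pow_zero]
    field_simp
    norm_num
  | succ n hn IH =>
    intro x hx
    have h2 : (Polynomial.derivative (Polynomial.derivative f)).natDegree = 0 := by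
      have h1 := Polynomial.natDegree_derivative_le f
      have h2 := Polynomial.natDegree_derivative_le (Polynomial.derivative f)
      omega
    have hdd : Polynomial.derivative (Polynomial.derivative f)
        = Polynomial.C ((Polynomial.derivative (Polynomial.derivative f)).coeff 0) :=
      Polynomial.eq_C_of_natDegree_le_zero (le_of_eq h2)
    have hBc : ∀ y : ℝ, (Polynomial.derivative (Polynomial.derivative f)).eval y
        = (Polynomial.derivative (Polynomial.derivative f)).eval x := by
      intro y; rw [hdd]; simp
    have hs : IsOpen {y : ℝ | 0 < f.eval y} :=
      isOpen_lt continuous_const (Polynomial.continuous f)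
    have hev : iteratedDeriv n (fun y => Real.sqrt (f.eval y)) =ᶠ[nhds x]
        (fun y => ∑ k ∈ Finset.Icc ((n+1)/2) n,
          cf n k * ((Polynomial.derivative f).eval y)^(2*k-n)
            * ((Polynomial.derivative (Polynomial.derivative f)).eval x)^(n-k)
            * (f.eval y)^(-((k:ℝ)-1/2))) := by
      filter_upwards [hs.mem_nhds hx] with y hy
      rw [IH y hy]
      unfold Tt
      refine Finset.sum_congr rfl fun k _ => ?_
      rw [hBc y]
    rw [iteratedDeriv_succ, hev.deriv_eq]
    have hder : HasDerivAt (fun y => ∑ k ∈ Finset.Icc ((n+1)/2) n,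
          cf n k * ((Polynomial.derivative f).eval y)^(2*k-n)
            * ((Polynomial.derivative (Polynomial.derivative f)).eval x)^(n-k)
            * (f.eval y)^(-((k:ℝ)-1/2)))
        (∑ k ∈ Finset.Icc ((n+1)/2) n,
          ((((2*k-n : ℕ) : ℝ) * cf n k * ((Polynomial.derivative f).eval x)^(2*k-n-1)
              * ((Polynomial.derivative (Polynomial.derivative f)).eval x)^(n-k+1)
              * (f.eval x)^(-((k:ℝ)-1/2)))
            + ((1/2 - (k:ℝ)) * cf n k * ((Polynomial.derivative f).eval x)^(2*k-n+1)
              * ((Polynomial.derivative (Polynomial.derivative f)).eval x)^(n-k)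
              * (f.eval x)^(-((k:ℝ)-1/2) - 1)))) x := by
      apply HasDerivAt.fun_sum
      intro k hk
      have hAk : HasDerivAt (fun y => (Polynomial.derivative f).eval y)
          ((Polynomial.derivative (Polynomial.derivative f)).eval x) x :=
        (Polynomial.derivative f).hasDerivAt x
      have hFk : HasDerivAt (fun y => f.eval y) ((Polynomial.derivative f).eval x) x :=
        f.hasDerivAt x
      have h1 := ((hAk.pow (2*k-n)).const_mul (cf n k)).mul_const
        (((Polynomial.derivative (Polynomial.derivative f)).eval x)^(n-k))
      have h2' := hFk.rpow_const (p := -((k:ℝ)-1/2)) (Or.inl hx.ne')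
      have h3 := h1.mul h2'
      refine h3.congr_deriv ?_
      simp only [Pi.pow_apply]
      ring
    rw [hder.deriv]
    exact sum_step' _ _ _ n hn

/-- n-th derivative of the square root of a quadratic polynomial
(Lemma on Faà di Bruno for √f with f quadratic). -/
theorem iteratedDeriv_sqrt_quadratic (f : Polynomial ℝ) (hf : f.natDegree ≤ 2)
    (x : ℝ) (hx : 0 < f.eval x) (n : ℕ) (hn : 1 ≤ n) :
    iteratedDeriv n (fun y => Real.sqrt (f.eval y)) x
      = ∑ k ∈ Finset.Icc ((n + 1) / 2) n,
          ((-1 : ℝ) ^ (k + 1) / 2 ^ (n + k - 1)) *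
            ((n.factorial * (2 * k - 2).factorial : ℕ) : ℝ) /
              (((2 * k - n).factorial * (n - k).factorial * (k - 1).factorial : ℕ) : ℝ) *
            ((Polynomial.derivative f).eval x) ^ (2 * k - n) *
            ((Polynomial.derivative (Polynomial.derivative f)).eval x) ^ (n - k) /
            (f.eval x) ^ ((k : ℝ) - 1 / 2) := by
  rw [key f hf n hn x hx]
  refine Finset.sum_congr rfl fun k hk => ?_
  unfold Tt cf
  rw [Real.rpow_neg hx.le]
  ring
end
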